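/- Fix an integer κ ≥ 3, let (X_t)_{t≥0} be a κ-color FCA trajectory on ℤ, and suppose no edge flips at any time t ≥ t_0, where t_0 ≥ 0. Then for every t ≥ t_0 and x ∈ ℤ: rk_{t+1}(x) = rk_t(x) + 1 if there exists y ∈ {x−1, x+1} with X_t(y) = b(κ) and rk_t(y) > rk_t(x), and rk_{t+1}(x) = rk_t(x) otherwise. -/

import Mathlib

noncomputable section

namespace FCA

/-- The blinking color `b(κ) = ⌊(κ-1)/2⌋`. -/
def blink (κ : ℕ) : ℕ := (κ - 1) / 2

/-- One step of the κ-color firefly cellular automaton on ℤ. -/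
def step (κ : ℕ) (X : ℤ → ZMod κ) : ℤ → ZMod κ := fun x =>
  if (X x).val > blink κ ∧ ((X (x - 1)).val = blink κ ∨ (X (x + 1)).val = blink κ)
  then X x else X x + 1

/-- The FCA trajectory started from `X0`. -/
def traj (κ : ℕ) (X0 : ℤ → ZMod κ) : ℕ → ℤ → ZMod κ
  | 0 => X0
  | t + 1 => step κ (traj κ X0 t)

/-- Site `x` is excited at time `t`: `X_{t+1}(x) = X_t(x)`. -/
def excited (κ : ℕ) (X0 : ℤ → ZMod κ) (t : ℕ) (x : ℤ) : Prop :=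
  traj κ X0 (t + 1) x = traj κ X0 t x

/-- The number of excitations of site `x` before time `t`. -/
def ne' (κ : ℕ) (X0 : ℤ → ZMod κ) (t : ℕ) (x : ℤ) : ℕ :=
  ((Finset.range t).filter fun s => traj κ X0 (s + 1) x = traj κ X0 s x).card

/-- The associated 1-form on the oriented edge `(x, x+1)`. -/
def dform (κ : ℕ) (X : ℤ → ZMod κ) (x : ℤ) : ℤ :=
  let d : ℕ := (X (x + 1) - X x).val
  if 2 * d < κ then (d : ℤ)
  else if κ < 2 * d then (d : ℤ) - (κ : ℤ)
  else if (X x).val ≤ blink κ then ((κ / 2 : ℕ) : ℤ) else -((κ / 2 : ℕ) : ℤ)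

/-- The edge `(x, x+1)` flips at time `t`. -/
def flips (κ : ℕ) (X0 : ℤ → ZMod κ) (t : ℕ) (x : ℤ) : Prop :=
  (0 < dform κ (traj κ X0 t) x ∧ dform κ (traj κ X0 (t + 1)) x < 0) ∨
  (dform κ (traj κ X0 t) x < 0 ∧ 0 < dform κ (traj κ X0 (t + 1)) x)

/-- Path integral of an edge function: `∫_x^y f = Σ_{i=x}^{y-1} f(i)` for `x ≤ y`,
and `∫_y^x f = -∫_x^y f`. -/
def pathInt (f : ℤ → ℤ) (x y : ℤ) : ℤ :=
  if x ≤ y then ∑ i ∈ Finset.Ico x y, f i else -∑ i ∈ Finset.Ico y x, f i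

/-- The tournament expansion: `rk_t(0) = ne_t(0)` and `rk_t(x) = rk_t(0) - ∫_0^x dX_t`. -/
def rk (κ : ℕ) (X0 : ℤ → ZMod κ) (t : ℕ) (x : ℤ) : ℤ :=
  (ne' κ X0 t 0 : ℤ) - pathInt (dform κ (traj κ X0 t)) 0 x

/-- `M_t(r)`: the maximum rank at time `t` among sites `x` with `|x| ≤ r`. -/
def maxRk (κ : ℕ) (X0 : ℤ → ZMod κ) (t : ℕ) (r : ℝ) : ℤ :=
  sSup (rk κ X0 t '' {x : ℤ | |(x : ℝ)| ≤ r})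

end FCA

open FCA

/-!
Without flips the 1-form moves by exactly the difference of the excitation indicators of the two
endpoints: this holds modulo `κ`, both sides lie in `[-κ/2, κ/2]` up to `±1`, and for `κ ≥ 3`
a wrap-around by `±κ` would force a sign flip. Hence `rk` telescopes to
`rk_{t+1}(x) = rk_t(x) + [x excited at t]`. Next to a blinking site `y`, the sign of the edge
between `x` and `y` shows that `rk_t(y) > rk_t(x)` exactly when `X_t(x) > b(κ)`, which is the
excitation rule.
-/

theorem Int.eq_add_of_modEq_of_not_signFlip {κ a b c : ℤ} (hκ : 3 ≤ κ) (ha : |2 * a| ≤ κ)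
    (hb : |2 * b| ≤ κ) (hc : |c| ≤ 1) (h : a ≡ b + c [ZMOD κ])
    (hsign : ¬ ((0 < b ∧ a < 0) ∨ (b < 0 ∧ 0 < a))) : a = b + c := by
  obtain ⟨q, hq⟩ := h.dvd
  rw [abs_le] at ha hb hc
  rcases lt_trichotomy q 0 with hq0 | rfl | hq0
  · have : κ * q ≤ -κ := by nlinarith
    exact absurd (Or.inr ⟨by omega, by omega⟩) hsign
  · omega
  · have : κ ≤ κ * q := by nlinarith
    exact absurd (Or.inl ⟨by omega, by omega⟩) hsign

theorem ZMod.val_sub_of_lt {n : ℕ} [NeZero n] {a b : ZMod n} (h : a.val < b.val) :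
    (a - b).val = a.val + n - b.val := by
  have hba : (b - a).val = b.val - a.val := ZMod.val_sub h.le
  have : NeZero (b - a) := ⟨fun h0 => by rw [h0, ZMod.val_zero] at hba; omega⟩
  rw [← neg_sub, ZMod.val_neg_of_ne_zero, hba]
  have := ZMod.val_lt b
  omega

namespace FCA

variable {κ : ℕ}

theorem pathInt_self (f : ℤ → ℤ) (a : ℤ) : pathInt f a a = 0 := by
  simp [pathInt]

theorem pathInt_add_one (f : ℤ → ℤ) (a x : ℤ) : pathInt f a (x + 1) = pathInt f a x + f x := by
  unfold pathInt
  rcases le_or_gt a x with h | h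
  · rw [if_pos (by omega), if_pos h, ← Finset.insert_Ico_right_eq_Ico_add_one h,
      Finset.sum_insert (by simp), add_comm]
  · rw [if_neg (not_le.2 h), ← Finset.insert_Ico_add_one_left_eq_Ico h,
      Finset.sum_insert (by simp)]
    split_ifs with h'
    · obtain rfl : a = x + 1 := by omega
      simp
    · ring

theorem pathInt_eq_add_sub_of_forall {f g c : ℤ → ℤ} (h : ∀ i, g i = f i + c i - c (i + 1))
    (a x : ℤ) : pathInt g a x = pathInt f a x + c a - c x := by
  induction x using Int.inductionOn' (b := a) with
  | zero => simp [pathInt_self]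
  | succ k _ ih => rw [pathInt_add_one, pathInt_add_one, ih, h]; ring
  | pred k _ ih =>
    rw [← sub_add_cancel k 1, pathInt_add_one, pathInt_add_one, h, sub_add_cancel] at ih
    linarith

def excitedInd (κ : ℕ) (X : ℤ → ZMod κ) (x : ℤ) : ℤ := if step κ X x = X x then 1 else 0

theorem step_eq_add_one_sub_excitedInd (X : ℤ → ZMod κ) (x : ℤ) :
    step κ X x = X x + 1 - excitedInd κ X x := by
  unfold excitedInd
  split_ifs with h
  · rw [h]; push_cast; ring
  · unfold step at h ⊢
    split_ifs at h ⊢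
    · exact absurd rfl h
    · push_cast; ring

theorem step_eq_self_iff (hκ : κ ≠ 1) (X : ℤ → ZMod κ) (x : ℤ) :
    step κ X x = X x ↔
      blink κ < (X x).val ∧ ((X (x - 1)).val = blink κ ∨ (X (x + 1)).val = blink κ) := by
  have : Nontrivial (ZMod κ) := ZMod.nontrivial_iff.2 hκ
  unfold step
  split_ifs with h
  · exact iff_of_true rfl h
  · exact iff_of_false (by simp) h

theorem dform_eq (X : ℤ → ZMod κ) (x : ℤ) :
    dform κ X x = if 2 * (X (x + 1) - X x).val < κ then ((X (x + 1) - X x).val : ℤ)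
      else if κ < 2 * (X (x + 1) - X x).val then ((X (x + 1) - X x).val : ℤ) - κ
      else if (X x).val ≤ blink κ then ((κ / 2 : ℕ) : ℤ) else -((κ / 2 : ℕ) : ℤ) := rfl

theorem abs_two_mul_dform_le [NeZero κ] (X : ℤ → ZMod κ) (x : ℤ) : |2 * dform κ X x| ≤ κ := by
  have := ZMod.val_lt (X (x + 1) - X x)
  rw [abs_le, dform_eq]
  split_ifs <;> constructor <;> push_cast <;> omega

theorem intCast_dform [NeZero κ] (X : ℤ → ZMod κ) (x : ℤ) :
    (dform κ X x : ZMod κ) = X (x + 1) - X x := by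
  rw [dform_eq]
  set d := X (x + 1) - X x
  have hd : d.val < κ := ZMod.val_lt d
  have hcast : ((d.val : ℤ) : ZMod κ) = d := by simp
  split_ifs with h1 h2 h3
  · exact hcast
  · push_cast at hcast ⊢; rw [ZMod.natCast_self, sub_zero, hcast]
  · rw [show κ / 2 = d.val by omega, hcast]
  · have h2d : (d.val : ZMod κ) + d.val = 0 := by
      rw [← Nat.cast_add, show d.val + d.val = κ by omega, ZMod.natCast_self]
    rw [show κ / 2 = d.val by omega]
    push_cast at hcast ⊢
    exact (neg_eq_of_add_eq_zero_left h2d).trans hcast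

theorem dform_neg_iff_of_val_right_eq_blink [NeZero κ] (X : ℤ → ZMod κ) (x : ℤ)
    (hb : (X (x + 1)).val = blink κ) : dform κ X x < 0 ↔ blink κ < (X x).val := by
  have := ZMod.val_lt (X x)
  rw [dform_eq]
  rcases le_or_gt (X x).val (X (x + 1)).val with h | h
  · rw [ZMod.val_sub h]
    unfold blink at *
    split_ifs <;> omega
  · rw [ZMod.val_sub_of_lt h]
    unfold blink at *
    split_ifs <;> omega

theorem dform_pos_iff_of_val_left_eq_blink [NeZero κ] (X : ℤ → ZMod κ) (x : ℤ)
    (hb : (X x).val = blink κ) : 0 < dform κ X x ↔ blink κ < (X (x + 1)).val := by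
  have := ZMod.val_lt (X (x + 1))
  rw [dform_eq]
  rcases le_or_gt (X x).val (X (x + 1)).val with h | h
  · rw [ZMod.val_sub h]
    unfold blink at *
    split_ifs <;> omega
  · rw [ZMod.val_sub_of_lt h]
    unfold blink at *
    split_ifs <;> omega

theorem dform_step_of_not_signFlip (hκ : 3 ≤ κ) (X : ℤ → ZMod κ) (x : ℤ)
    (h : ¬ ((0 < dform κ X x ∧ dform κ (step κ X) x < 0) ∨
      (dform κ X x < 0 ∧ 0 < dform κ (step κ X) x))) :
    dform κ (step κ X) x = dform κ X x + excitedInd κ X x - excitedInd κ X (x + 1) := by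
  have : NeZero κ := ⟨by omega⟩
  have hc : |excitedInd κ X x - excitedInd κ X (x + 1)| ≤ 1 := by
    unfold excitedInd; split_ifs <;> norm_num
  rw [add_sub_assoc]
  refine Int.eq_add_of_modEq_of_not_signFlip (by omega) (abs_two_mul_dform_le _ x)
    (abs_two_mul_dform_le _ x) hc ?_ h
  rw [← ZMod.intCast_eq_intCast_iff]
  push_cast
  rw [intCast_dform, intCast_dform, step_eq_add_one_sub_excitedInd,
    step_eq_add_one_sub_excitedInd]
  ring

theorem ne'_succ (X0 : ℤ → ZMod κ) (t : ℕ) (x : ℤ) :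
    (ne' κ X0 (t + 1) x : ℤ) = ne' κ X0 t x + excitedInd κ (traj κ X0 t) x := by
  unfold ne'
  change _ = _ + (if traj κ X0 (t + 1) x = traj κ X0 t x then 1 else 0)
  rw [Finset.range_add_one, Finset.filter_insert]
  split_ifs
  · rw [Finset.card_insert_of_notMem (by simp)]
    push_cast; rfl
  · simp

theorem rk_add_one (X0 : ℤ → ZMod κ) (t : ℕ) (x : ℤ) :
    rk κ X0 t (x + 1) = rk κ X0 t x - dform κ (traj κ X0 t) x := by
  unfold rk
  rw [pathInt_add_one]
  ring

theorem rk_succ_of_forall_not_flips (hκ : 3 ≤ κ) (X0 : ℤ → ZMod κ) (t : ℕ)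
    (hnf : ∀ x, ¬ flips κ X0 t x) (x : ℤ) :
    rk κ X0 (t + 1) x = rk κ X0 t x + excitedInd κ (traj κ X0 t) x := by
  have hint := pathInt_eq_add_sub_of_forall
    (fun i => dform_step_of_not_signFlip hκ (traj κ X0 t) i (hnf i)) 0 x
  unfold rk
  rw [ne'_succ, traj, hint]
  ring

theorem exists_blinking_neighbor_rk_lt_iff [NeZero κ] (X0 : ℤ → ZMod κ) (t : ℕ) (x : ℤ) :
    (∃ y : ℤ, (y = x - 1 ∨ y = x + 1) ∧ (traj κ X0 t y).val = blink κ ∧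
        rk κ X0 t x < rk κ X0 t y) ↔
      blink κ < (traj κ X0 t x).val ∧
        ((traj κ X0 t (x - 1)).val = blink κ ∨ (traj κ X0 t (x + 1)).val = blink κ) := by
  have hleft (hb : (traj κ X0 t (x - 1)).val = blink κ) :
      rk κ X0 t x < rk κ X0 t (x - 1) ↔ blink κ < (traj κ X0 t x).val := by
    have hpos := dform_pos_iff_of_val_left_eq_blink (traj κ X0 t) (x - 1) hb
    have hrk := rk_add_one X0 t (x - 1)
    rw [sub_add_cancel] at hpos hrk
    omega
  have hright (hb : (traj κ X0 t (x + 1)).val = blink κ) :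
      rk κ X0 t x < rk κ X0 t (x + 1) ↔ blink κ < (traj κ X0 t x).val := by
    have hneg := dform_neg_iff_of_val_right_eq_blink (traj κ X0 t) x hb
    have hrk := rk_add_one X0 t x
    omega
  constructor
  · rintro ⟨y, rfl | rfl, hb, hlt⟩
    · exact ⟨(hleft hb).1 hlt, Or.inl hb⟩
    · exact ⟨(hright hb).1 hlt, Or.inr hb⟩
  · rintro ⟨hgt, hb | hb⟩
    · exact ⟨x - 1, Or.inl rfl, hb, (hleft hb).2 hgt⟩
    · exact ⟨x + 1, Or.inr rfl, hb, (hright hb).2 hgt⟩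

end FCA

/-- If no edge flips at any time `t ≥ t₀`, then the tournament expansion
evolves as a tournament process: `rk_{t+1}(x) = rk_t(x) + 1` if some neighbor `y` of `x`
blinks at time `t` and has higher rank, and `rk_{t+1}(x) = rk_t(x)` otherwise. -/
theorem fca_tournament_evolution (κ : ℕ) (hκ : 3 ≤ κ) (X0 : ℤ → ZMod κ) (t₀ : ℕ)
    (hnoflip : ∀ t : ℕ, t₀ ≤ t → ∀ x : ℤ, ¬ flips κ X0 t x) :
    ∀ (t : ℕ), t₀ ≤ t → ∀ x : ℤ,
      ((∃ y : ℤ, (y = x - 1 ∨ y = x + 1) ∧ (traj κ X0 t y).val = blink κ ∧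
          rk κ X0 t x < rk κ X0 t y) →
        rk κ X0 (t + 1) x = rk κ X0 t x + 1) ∧
      (¬ (∃ y : ℤ, (y = x - 1 ∨ y = x + 1) ∧ (traj κ X0 t y).val = blink κ ∧
          rk κ X0 t x < rk κ X0 t y) →
        rk κ X0 (t + 1) x = rk κ X0 t x) := by
  intro t ht x
  have : NeZero κ := ⟨by omega⟩
  have hexcited := (exists_blinking_neighbor_rk_lt_iff X0 t x).trans
    (step_eq_self_iff (by omega) (traj κ X0 t) x).symm
  rw [rk_succ_of_forall_not_flips hκ X0 t (hnoflip t ht) x, excitedInd]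
  exact ⟨fun h => by rw [if_pos (hexcited.1 h)],
    fun h => by rw [if_neg (mt hexcited.2 h), add_zero]⟩
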